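/- arXiv:0910.4770 — 2 statements merged into one kernel-verified Lean document; each statement's English description precedes it below -/
import Mathlib

section
/- Let n ≥ q ≥ 1 and 0 ≤ s ≤ n−q be integers, and let w(n,q,s) : ℝ^{q−1} × ℝ^{n−q} × ℝ → ℝ^{q−1} × ℝ be the standard wrinkle, w(n,q,s)(y, x, z) = (y, z³ + 3(‖y‖² − 1)z − ∑_{i=1}^{s} x_i² + ∑_{j=s+1}^{n−q} x_j²). Then the Fréchet derivative of w(n,q,s) at a point (y, x, z) is surjective if and only if it is not the case that x = 0 and ‖y‖² + z² = 1. Consequently, the singular set of w(n,q,s) is exactly {(y, 0, z) : ‖y‖² + z² = 1}. -/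
/-!
Because `w` keeps the `y`-coordinates, its derivative at `(y, x, z)` is onto exactly when the
partial derivative of its last component in the `(x, z)`-directions is a nonzero functional.
That partial map splits as the nondegenerate quadratic form `∑ ±x_j²` in `x` plus the cubic
`z³ + 3(‖y‖² − 1)z` in `z`; their derivatives vanish exactly at `x = 0` and where
`3z² + 3(‖y‖² − 1) = 0`.
-/

open ContinuousLinearMap Function

section

variable {𝕜 E F G : Type*} [NontriviallyNormedField 𝕜]
  [NormedAddCommGroup E] [NormedSpace 𝕜 E] [NormedAddCommGroup F] [NormedSpace 𝕜 F]
  [NormedAddCommGroup G] [NormedSpace 𝕜 G]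

theorem ContinuousLinearMap.surjective_fst_prod_iff (L : E × F →L[𝕜] G) :
    Surjective ((fst 𝕜 E F).prod L) ↔ Surjective (L ∘L inr 𝕜 E F) := by
  constructor
  · intro h c
    obtain ⟨⟨a, b⟩, hab⟩ := h (0, c)
    obtain ⟨rfl, hc⟩ := Prod.ext_iff.mp hab
    exact ⟨b, hc⟩
  · rintro h ⟨a, c⟩
    obtain ⟨b, hb⟩ := h (c - L (a, 0))
    refine ⟨(a, b), Prod.ext rfl ?_⟩
    calc L (a, b) = L (a, 0) + L (0, b) := by rw [← map_add, Prod.mk_add_mk, add_zero, zero_add]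
      _ = c := by rw [show L (0, b) = c - L (a, 0) from hb, add_sub_cancel]

theorem DifferentiableAt.fderiv_comp_inr {f : E × F → G} {a : E} {b : F}
    (hf : DifferentiableAt 𝕜 f (a, b)) :
    fderiv 𝕜 f (a, b) ∘L inr 𝕜 E F = fderiv 𝕜 (fun y ↦ f (a, y)) b :=
  (hf.hasFDerivAt.comp b (hasFDerivAt_prodMk_right a b)).fderiv.symm

theorem surjective_fderiv_prodMk_fst_iff {f : E × F → G} {a : E} {b : F}
    (hf : DifferentiableAt 𝕜 f (a, b)) :
    Surjective (fderiv 𝕜 (fun p ↦ (p.1, f p)) (a, b)) ↔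
      Surjective (fderiv 𝕜 (fun y ↦ f (a, y)) b) := by
  rw [differentiableAt_fst.fderiv_prodMk hf, fderiv_fst, surjective_fst_prod_iff,
    hf.fderiv_comp_inr]

theorem fderiv_add_fst_snd_eq_zero_iff {f : E → G} {g : F → G} {a : E} {b : F}
    (hf : DifferentiableAt 𝕜 f a) (hg : DifferentiableAt 𝕜 g b) :
    fderiv 𝕜 (fun p : E × F ↦ f p.1 + g p.2) (a, b) = 0 ↔
      fderiv 𝕜 f a = 0 ∧ fderiv 𝕜 g b = 0 := by
  have h : HasFDerivAt (fun p : E × F ↦ f p.1 + g p.2)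
      ((fderiv 𝕜 f a).coprod (fderiv 𝕜 g b)) (a, b) :=
    ((hf.hasFDerivAt.comp (a, b) hasFDerivAt_fst).fun_add
      (hg.hasFDerivAt.comp (a, b) hasFDerivAt_snd)).congr_fderiv (by ext <;> simp)
  rw [h.fderiv]
  refine ⟨fun h0 ↦ ⟨?_, ?_⟩, fun ⟨h1, h2⟩ ↦ by rw [h1, h2]; ext <;> simp⟩
  · simpa using congrArg (· ∘L inl 𝕜 E F) h0
  · simpa using congrArg (· ∘L inr 𝕜 E F) h0

end

theorem fderiv_cubic_eq_zero_iff {𝕜 : Type*} [NontriviallyNormedField 𝕜] (c z : 𝕜) :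
    fderiv 𝕜 (fun t ↦ t ^ 3 + c * t) z = 0 ↔ 3 * z ^ 2 + c = 0 := by
  have h : HasDerivAt (fun t ↦ t ^ 3 + c * t) (3 * z ^ 2 + c) z := by
    simpa using (hasDerivAt_pow 3 z).fun_add ((hasDerivAt_id' z).const_mul c)
  rw [h.hasFDerivAt.fderiv, ← toSpanSingleton_zero, toSpanSingleton_inj]

theorem fderiv_weighted_sum_sq_eq_zero_iff {𝕜 ι : Type*} [NontriviallyNormedField 𝕜]
    [CharZero 𝕜] [Fintype ι] {ε : ι → 𝕜} (hε : ∀ i, ε i ≠ 0) (x : ι → 𝕜) :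
    fderiv 𝕜 (fun v : ι → 𝕜 ↦ ∑ i, ε i * v i ^ 2) x = 0 ↔ x = 0 := by
  have h : HasFDerivAt (fun v : ι → 𝕜 ↦ ∑ i, ε i * v i ^ 2)
      (∑ i, (ε i * (2 * x i)) • proj (R := 𝕜) (φ := fun _ ↦ 𝕜) i) x := by
    refine HasFDerivAt.fun_sum fun i _ ↦ ?_
    simpa [smul_smul] using ((hasFDerivAt_apply (𝕜 := 𝕜) i x).pow 2).const_mul (ε i)
  classical
  rw [h.fderiv]
  refine ⟨fun h0 ↦ funext fun i ↦ ?_, by rintro rfl; ext; simp⟩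
  simpa [Pi.single_apply, hε i] using congrArg (· (Pi.single i 1)) h0

theorem standard_wrinkle_singular_set_general (n q s : ℕ)
    (w : (Fin (q - 1) → ℝ) × (Fin (n - q) → ℝ) × ℝ → (Fin (q - 1) → ℝ) × ℝ)
    (hw : ∀ (y : Fin (q - 1) → ℝ) (x : Fin (n - q) → ℝ) (z : ℝ),
      w (y, x, z) =
        (y, z ^ 3 + 3 * ((∑ j : Fin (q - 1), (y j) ^ 2) - 1) * z +
          ∑ j : Fin (n - q), (if (j : ℕ) < s then (-1 : ℝ) else 1) * (x j) ^ 2)) :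
    (∀ (y : Fin (q - 1) → ℝ) (x : Fin (n - q) → ℝ) (z : ℝ),
      Function.Surjective (fderiv ℝ w (y, x, z)) ↔
        ¬ (x = 0 ∧ (∑ j : Fin (q - 1), (y j) ^ 2) + z ^ 2 = 1)) ∧
    {p : (Fin (q - 1) → ℝ) × (Fin (n - q) → ℝ) × ℝ |
        ¬ Function.Surjective (fderiv ℝ w p)} =
      {p | p.2.1 = 0 ∧ (∑ j : Fin (q - 1), (p.1 j) ^ 2) + p.2.2 ^ 2 = 1} := by
  set ε : Fin (n - q) → ℝ := fun j ↦ if (j : ℕ) < s then -1 else 1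
  have hε : ∀ j, ε j ≠ 0 := fun j ↦ by dsimp only [ε]; split_ifs <;> norm_num
  have hw' : w = fun p ↦ (p.1, ∑ j, ε j * p.2.1 j ^ 2 +
      (p.2.2 ^ 3 + 3 * ((∑ j, p.1 j ^ 2) - 1) * p.2.2)) := by
    funext ⟨y, x, z⟩
    rw [hw, add_comm]
  have key : ∀ y x z, Surjective (fderiv ℝ w (y, x, z)) ↔
      ¬ (x = 0 ∧ (∑ j, y j ^ 2) + z ^ 2 = 1) := by
    intro y x z
    rw [hw', surjective_fderiv_prodMk_fst_iff (by fun_prop), ← coe_coe,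
      LinearMap.surjective_iff_ne_zero, Ne, ← toLinearMap_zero, coe_inj]
    dsimp only
    rw [fderiv_add_fst_snd_eq_zero_iff (f := fun v : Fin (n - q) → ℝ ↦ ∑ j, ε j * v j ^ 2)
        (g := fun t ↦ t ^ 3 + 3 * ((∑ j, y j ^ 2) - 1) * t) (by fun_prop) (by fun_prop),
      fderiv_weighted_sum_sq_eq_zero_iff hε, fderiv_cubic_eq_zero_iff]
    exact not_congr (and_congr_right fun _ ↦ ⟨fun h ↦ by linarith, fun h ↦ by linarith⟩)
  refine ⟨key, ?_⟩
  ext ⟨y, x, z⟩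
  simp only [Set.mem_ofPred_eq, key, not_not]

/-- For the standard wrinkle
`w(n,q,s)(y, x, z) = (y, z³ + 3(‖y‖² − 1)z − ∑_{i≤s} x_i² + ∑_{j>s} x_j²)`,
the Fréchet derivative at `(y, x, z)` is surjective if and only if it is not the case
that `x = 0` and `‖y‖² + z² = 1`.  Consequently the singular set of `w(n,q,s)` is
exactly `{(y, 0, z) : ‖y‖² + z² = 1}`. -/
theorem standard_wrinkle_singular_set (n q s : ℕ)
    (hq : 1 ≤ q) (hnq : q ≤ n) (hs : s ≤ n - q)
    (w : (Fin (q - 1) → ℝ) × (Fin (n - q) → ℝ) × ℝ → (Fin (q - 1) → ℝ) × ℝ)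
    (hw : ∀ (y : Fin (q - 1) → ℝ) (x : Fin (n - q) → ℝ) (z : ℝ),
      w (y, x, z) =
        (y, z ^ 3 + 3 * ((∑ j : Fin (q - 1), (y j) ^ 2) - 1) * z +
          ∑ j : Fin (n - q), (if (j : ℕ) < s then (-1 : ℝ) else 1) * (x j) ^ 2)) :
    (∀ (y : Fin (q - 1) → ℝ) (x : Fin (n - q) → ℝ) (z : ℝ),
      Function.Surjective (fderiv ℝ w (y, x, z)) ↔
        ¬ (x = 0 ∧ (∑ j : Fin (q - 1), (y j) ^ 2) + z ^ 2 = 1)) ∧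
    {p : (Fin (q - 1) → ℝ) × (Fin (n - q) → ℝ) × ℝ |
        ¬ Function.Surjective (fderiv ℝ w p)} =
      {p | p.2.1 = 0 ∧ (∑ j : Fin (q - 1), (p.1 j) ^ 2) + p.2.2 ^ 2 = 1} :=
  standard_wrinkle_singular_set_general n q s w hw
end

section
/- Let n ≥ q ≥ 1 and 0 ≤ s ≤ n−q be integers. Define the family of maps H : [0,1] × (ℝ^{q−1} × ℝ^{n−q} × ℝ) → ℝ^{q−1} × ℝ by H(t, (y, x, z)) = (y, z³ + 3(‖y‖² − 1 + 2t)z − ∑_{i=1}^{s} x_i² + ∑_{j=s+1}^{n−q} x_j²). Then H is continuous, H(0, ·) equals the standard wrinkle w(n,q,s), and the map H(1, ·) is a submersion: its Fréchet derivative is surjective at every point. Hence the standard wrinkle w(n,q,s) is homotopic to a submersion. -/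
/-!
The homotopy only shifts the coefficient of `z` from `3(‖y‖² − 1)` to `3(‖y‖² − 1 + 2t)`.
For `t > 1/2` the `z`-derivative `3z² + 3(‖y‖² − 1 + 2t)` of the last coordinate is positive,
and a map of the form `(u, v) ↦ (u, f(u, v))` has surjective derivative as soon as
`∂f/∂v` does not vanish.
-/

open Function

theorem ContinuousLinearMap.surjective_fst_prod_of_apply_inr_ne_zero {𝕜 E F : Type*} [Field 𝕜]
    [TopologicalSpace 𝕜] [AddCommGroup E] [Module 𝕜 E] [TopologicalSpace E]
    [AddCommGroup F] [Module 𝕜 F] [TopologicalSpace F]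
    (L : E × F →L[𝕜] 𝕜) {v : F} (hv : L (0, v) ≠ 0) :
    Surjective ((ContinuousLinearMap.fst 𝕜 E F).prod L) := by
  rintro ⟨a, b⟩
  refine ⟨(a, ((b - L (a, 0)) / L (0, v)) • v), ?_⟩
  have hsplit : (a, ((b - L (a, 0)) / L (0, v)) • v) =
      (a, 0) + ((b - L (a, 0)) / L (0, v)) • (0, v) := by
    simp
  simp only [ContinuousLinearMap.prod_apply, ContinuousLinearMap.coe_fst', hsplit, map_add, map_smul]
  simp [div_mul_cancel₀ _ hv]

section

variable {k m : ℕ}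

noncomputable def wrinkleHeight (s : ℕ) (t : ℝ) (p : (Fin k → ℝ) × (Fin m → ℝ) × ℝ) : ℝ :=
  p.2.2 ^ 3 + 3 * ((∑ j, p.1 j ^ 2) - 1 + 2 * t) * p.2.2 +
    ∑ j : Fin m, (if (j : ℕ) < s then (-1 : ℝ) else 1) * p.2.1 j ^ 2

theorem continuous_wrinkleHeight (s : ℕ) :
    Continuous fun r : ℝ × (Fin k → ℝ) × (Fin m → ℝ) × ℝ => wrinkleHeight s r.1 r.2 := by
  unfold wrinkleHeight; fun_prop

theorem differentiable_wrinkleHeight (s : ℕ) (t : ℝ) :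
    Differentiable ℝ (wrinkleHeight (k := k) (m := m) s t) := by
  unfold wrinkleHeight; fun_prop

theorem hasDerivAt_wrinkleHeight_vertical (s : ℕ) (t : ℝ) (y : Fin k → ℝ) (x : Fin m → ℝ)
    (z : ℝ) :
    HasDerivAt (fun z' => wrinkleHeight s t (y, x, z'))
      (3 * z ^ 2 + 3 * ((∑ j, y j ^ 2) - 1 + 2 * t)) z := by
  have h := ((hasDerivAt_pow 3 z).add ((hasDerivAt_id' z).const_mul
    (3 * ((∑ j, y j ^ 2) - 1 + 2 * t)))).add_const
      (∑ j : Fin m, (if (j : ℕ) < s then (-1 : ℝ) else 1) * x j ^ 2)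
  exact h.congr_deriv (by norm_num)

theorem fderiv_wrinkleHeight_vertical (s : ℕ) (t : ℝ) (y : Fin k → ℝ) (x : Fin m → ℝ)
    (z : ℝ) :
    fderiv ℝ (wrinkleHeight s t) (y, x, z) (0, 0, 1) =
      3 * z ^ 2 + 3 * ((∑ j, y j ^ 2) - 1 + 2 * t) := by
  have hline :
      HasDerivAt (fun z' : ℝ => ((y, x, z') : (Fin k → ℝ) × (Fin m → ℝ) × ℝ)) (0, 0, 1) z :=
    (hasDerivAt_const z y).prodMk ((hasDerivAt_const z x).prodMk (hasDerivAt_id z))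
  exact ((differentiable_wrinkleHeight s t _).hasFDerivAt.comp_hasDerivAt z hline).unique
    (hasDerivAt_wrinkleHeight_vertical s t y x z)

theorem surjective_fderiv_graph_wrinkleHeight {s : ℕ} {t : ℝ} (ht : 1 / 2 < t)
    (p : (Fin k → ℝ) × (Fin m → ℝ) × ℝ) :
    Surjective (fderiv ℝ (fun p' => (p'.1, wrinkleHeight s t p')) p) := by
  obtain ⟨y, x, z⟩ := p
  rw [(hasFDerivAt_fst.prodMk (differentiable_wrinkleHeight s t _).hasFDerivAt).fderiv]
  refine ContinuousLinearMap.surjective_fst_prod_of_apply_inr_ne_zero _ (v := (0, 1)) ?_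
  rw [fderiv_wrinkleHeight_vertical]
  have : 0 ≤ ∑ j, y j ^ 2 := Finset.sum_nonneg fun j _ => sq_nonneg (y j)
  nlinarith [sq_nonneg z]

end

theorem standard_wrinkle_homotopic_to_submersion_general (n q s : ℕ)
    (w : (Fin (q - 1) → ℝ) × (Fin (n - q) → ℝ) × ℝ → (Fin (q - 1) → ℝ) × ℝ)
    (hw : ∀ (y : Fin (q - 1) → ℝ) (x : Fin (n - q) → ℝ) (z : ℝ),
      w (y, x, z) =
        (y, z ^ 3 + 3 * ((∑ j : Fin (q - 1), (y j) ^ 2) - 1) * z +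
          ∑ j : Fin (n - q), (if (j : ℕ) < s then (-1 : ℝ) else 1) * (x j) ^ 2))
    (H : ℝ × ((Fin (q - 1) → ℝ) × (Fin (n - q) → ℝ) × ℝ) → (Fin (q - 1) → ℝ) × ℝ)
    (hH : ∀ (t : ℝ) (y : Fin (q - 1) → ℝ) (x : Fin (n - q) → ℝ) (z : ℝ),
      H (t, (y, x, z)) =
        (y, z ^ 3 + 3 * ((∑ j : Fin (q - 1), (y j) ^ 2) - 1 + 2 * t) * z +
          ∑ j : Fin (n - q), (if (j : ℕ) < s then (-1 : ℝ) else 1) * (x j) ^ 2)) :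
    Continuous H ∧ (∀ p, H (0, p) = w p) ∧
    (∀ p, Function.Surjective (fderiv ℝ (fun p' => H (1, p')) p)) := by
  obtain rfl : H = fun r => (r.2.1, wrinkleHeight s r.1 r.2) :=
    funext fun ⟨t, y, x, z⟩ => hH t y x z
  refine ⟨continuous_snd.fst.prodMk (continuous_wrinkleHeight s), ?_,
    surjective_fderiv_graph_wrinkleHeight (t := 1) (by norm_num)⟩
  rintro ⟨y, x, z⟩
  simp [hw, wrinkleHeight]

/-- The family `H(t, (y, x, z)) = (y, z³ + 3(‖y‖² − 1 + 2t)z − ∑_{i≤s} x_i² + ∑_{j>s} x_j²)`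
is continuous, equals the standard wrinkle `w(n,q,s)` at `t = 0`, and at `t = 1` is a
submersion (surjective Fréchet derivative at every point).  Hence the standard wrinkle
is homotopic to a submersion. -/
theorem standard_wrinkle_homotopic_to_submersion (n q s : ℕ)
    (hq : 1 ≤ q) (hnq : q ≤ n) (hs : s ≤ n - q)
    (w : (Fin (q - 1) → ℝ) × (Fin (n - q) → ℝ) × ℝ → (Fin (q - 1) → ℝ) × ℝ)
    (hw : ∀ (y : Fin (q - 1) → ℝ) (x : Fin (n - q) → ℝ) (z : ℝ),
      w (y, x, z) =
        (y, z ^ 3 + 3 * ((∑ j : Fin (q - 1), (y j) ^ 2) - 1) * z +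
          ∑ j : Fin (n - q), (if (j : ℕ) < s then (-1 : ℝ) else 1) * (x j) ^ 2))
    (H : ℝ × ((Fin (q - 1) → ℝ) × (Fin (n - q) → ℝ) × ℝ) → (Fin (q - 1) → ℝ) × ℝ)
    (hH : ∀ (t : ℝ) (y : Fin (q - 1) → ℝ) (x : Fin (n - q) → ℝ) (z : ℝ),
      H (t, (y, x, z)) =
        (y, z ^ 3 + 3 * ((∑ j : Fin (q - 1), (y j) ^ 2) - 1 + 2 * t) * z +
          ∑ j : Fin (n - q), (if (j : ℕ) < s then (-1 : ℝ) else 1) * (x j) ^ 2)) :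
    Continuous H ∧ (∀ p, H (0, p) = w p) ∧
    (∀ p, Function.Surjective (fderiv ℝ (fun p' => H (1, p')) p)) :=
  standard_wrinkle_homotopic_to_submersion_general n q s w hw H hH
end
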